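/- Let k ≥ 1 and consider the time-homogeneous Markov chain on states {0, 1, …, k} in which state 0 is absorbing and, from each state i with 1 ≤ i ≤ k, the chain moves to state i−1 with probability 1/2 and to state k with probability 1/2. Then the expected hitting time of state 0 starting from state k equals 2^{k+1} − 2. -/

import Mathlib

open MeasureTheory ENNReal Finset

noncomputable section

/-- `μ` is the law of the time-homogeneous Markov chain on the state space `S` with
one-step transition probabilities `p` and initial state `s`, described through the
probabilities of all cylinder events. -/
def IsMarkovChain {S : Type*} [MeasurableSpace S] [DecidableEq S] (p : S → S → ℝ≥0∞) (s : S)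
    (μ : MeasureTheory.Measure (ℕ → S)) : Prop :=
  MeasureTheory.IsProbabilityMeasure μ ∧
    ∀ (T : ℕ) (path : ℕ → S),
      μ {ω | ∀ t ≤ T, ω t = path t} =
        (if path 0 = s then 1 else 0) * ∏ t ∈ Finset.range T, p (path t) (path (t + 1))

/-- The first *positive* hitting time `min {t > 0 : ω t = j}` of the state `j`
along the trajectory `ω`, viewed in `ℝ≥0∞` (it is `∞` if `j` is never hit). -/
def hitTime {S : Type*} (j : S) (ω : ℕ → S) : ℝ≥0∞ :=
  sInf ((fun t : ℕ => (t : ℝ≥0∞)) '' {t | 0 < t ∧ ω t = j})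

/-- The expected hitting time `E[T_{·,j}]` of state `j` under the trajectory law `μ`
(possibly `+∞`). -/
def expHit {S : Type*} [MeasurableSpace S] (μ : MeasureTheory.Measure (ℕ → S)) (j : S) :
    ℝ≥0∞ :=
  ∫⁻ ω, hitTime j ω ∂μ

/-- Transition probabilities of the nearest-neighbour Markov chain on `{a, …, b} ⊆ ℤ`
with reflecting barriers at `a` and `b`: from `a` go to `a+1`, from `b` go to `b-1`,
and from an interior state `i` go to `i+1` with probability `π i` and to `i-1` with
probability `1 - π i`. -/
def nnTrans (a b : ℤ) (π : ℤ → ℝ≥0∞) : ℤ → ℤ → ℝ≥0∞ := fun i j =>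
  if i = a then (if j = a + 1 then 1 else 0)
  else if i = b then (if j = b - 1 then 1 else 0)
  else if a < i ∧ i < b then
    (if j = i + 1 then π i else if j = i - 1 then 1 - π i else 0)
  else 0

/-- Transition probabilities of the Random-Compass chain on `{0, 1, …, k}`: state `0` is
absorbing and, from each state `i` with `1 ≤ i ≤ k`, the chain moves to `i - 1` with
probability `1/2` and to `k` with probability `1/2`. -/
def rcTrans (k : ℕ) : ℕ → ℕ → ℝ≥0∞ := fun i j =>
  if i = 0 then (if j = 0 then 1 else 0)
  else if i ≤ k then (if j = i - 1 then 1 / 2 else 0) + (if j = k then 1 / 2 else 0)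
  else 0

/-- The hitting time `min {t ≥ 0 : ω t = j}` of the state `j` along the trajectory `ω`,
viewed in `ℝ≥0∞` (it is `∞` if `j` is never visited). -/
def hitTimeFrom0 {S : Type*} (j : S) (ω : ℕ → S) : ℝ≥0∞ :=
  sInf ((fun t : ℕ => (t : ℝ≥0∞)) '' {t | ω t = j})

/-! Let `tabooLaw (rcTrans k) 0 k n j` be the probability of being at `j` at time `n` without
having visited `0`, and `green … j` its sum over `n`, the expected number of visits to `j`
before absorption. Since `P(T > n) = ∑ⱼ tabooLaw … n j`, the expected hitting time is
`E = ∑ⱼ green … j`. Looking one step back, `j < k` can only be entered from `j + 1`, while `k`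
is entered with probability `1/2` from every surviving state; hence
`green j = green (j + 1) / 2` and `green k = 1 + E / 2`. So `green (j + 1) = 2 ^ j * green 1`,
`E = (2 ^ k - 1) * green 1`, and `green k = 1 + E / 2` forces `green 1 = 2`, provided
`green 1 < ∞`. Finiteness comes from the chain itself: each visit to `1` is followed by
absorption with probability `1/2`, and absorption happens at most once, so `green 1 / 2 ≤ 1`. -/

lemma hitTimeFrom0_eq_tsum_indicator {S : Type*} (z : S) (ω : ℕ → S) :
    hitTimeFrom0 z ω = ∑' n, {ω : ℕ → S | ∀ t ≤ n, ω t ≠ z}.indicator 1 ω := by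
  classical
  by_cases hit : ∃ t, ω t = z
  · have hT : hitTimeFrom0 z ω = Nat.find hit :=
      le_antisymm (sInf_le ⟨_, Nat.find_spec hit, rfl⟩)
        (le_sInf <| by rintro _ ⟨t, ht, rfl⟩; exact Nat.cast_le.2 (Nat.find_min' hit ht))
    have hind (n : ℕ) : {ω : ℕ → S | ∀ t ≤ n, ω t ≠ z}.indicator 1 ω =
        if n < Nat.find hit then (1 : ℝ≥0∞) else 0 := by
      simp [Set.indicator_apply, Nat.lt_find_iff]
    rw [hT, tsum_congr hind,
      tsum_eq_sum (s := range (Nat.find hit)) fun n hn => if_neg (by simpa using hn),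
      sum_congr rfl fun n hn => if_pos (mem_range.1 hn)]
    simp
  · push Not at hit
    have hT : hitTimeFrom0 z ω = ⊤ := by simp [hitTimeFrom0, hit]
    simp [hT, hit]

section TabooLaw

variable {S : Type*} [DecidableEq S] {p : S → S → ℝ≥0∞} {s : S}

variable (p) in
def tabooLaw (z s : S) : ℕ → S → ℝ≥0∞
  | 0 => fun j => if j = s then 1 else 0
  | n + 1 => fun j => if j = z then 0 else ∑' i, tabooLaw z s n i * p i j

variable (p) in
def green (z s j : S) : ℝ≥0∞ := ∑' n, tabooLaw p z s n j

lemma tabooLaw_taboo {z : S} (hs : s ≠ z) (n : ℕ) : tabooLaw p z s n z = 0 := by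
  cases n <;> simp [tabooLaw, hs.symm]

end TabooLaw

section MarkovChain

variable {S : Type*} [MeasurableSpace S] [DecidableEq S] {p : S → S → ℝ≥0∞} {s : S}
  {μ : Measure (ℕ → S)}

lemma IsMarkovChain.measure_cylinder_inter_succ (h : IsMarkovChain p s μ) (n : ℕ) (c : ℕ → S)
    (j : S) :
    μ ({ω | ∀ t ≤ n, ω t = c t} ∩ {ω | ω (n + 1) = j}) =
      μ {ω | ∀ t ≤ n, ω t = c t} * p (c n) j := by
  have hcyl : {ω : ℕ → S | ∀ t ≤ n, ω t = c t} ∩ {ω | ω (n + 1) = j} =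
      {ω | ∀ t ≤ n + 1, ω t = Function.update c (n + 1) j t} := by
    ext ω
    simp only [Set.mem_inter_iff, Set.mem_ofPred_eq, Nat.le_succ_iff_eq_or_le, or_imp, forall_and,
      forall_eq, Function.update_self, and_comm]
    refine and_congr_right fun _ => forall₂_congr fun t ht => ?_
    rw [Function.update_of_ne (by omega)]
  have hpath : ∀ t ∈ range n, p (Function.update c (n + 1) j t)
      (Function.update c (n + 1) j (t + 1)) = p (c t) (c (t + 1)) := fun t ht => by
    rw [mem_range] at ht
    rw [Function.update_of_ne (by omega), Function.update_of_ne (by omega)]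
  rw [hcyl, h.2, h.2, prod_range_succ, prod_congr rfl hpath, mul_assoc,
    Function.update_of_ne (by omega), Function.update_of_ne (by omega), Function.update_self]

lemma IsMarkovChain.measure_prefix_inter_succ [Countable S] [MeasurableSingletonClass S]
    (h : IsMarkovChain p s μ) {n : ℕ} {D : Set (Fin (n + 1) → S)} {i : S}
    (hD : ∀ x ∈ D, x (Fin.last n) = i) (j : S) :
    μ ((fun ω (t : Fin (n + 1)) => ω t) ⁻¹' D ∩ {ω | ω (n + 1) = j}) =
      μ ((fun ω (t : Fin (n + 1)) => ω t) ⁻¹' D) * p i j := by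
  set P : (ℕ → S) → (Fin (n + 1) → S) := fun ω t => ω t
  have hP : Measurable P := measurable_pi_lambda _ fun t => measurable_pi_apply _
  have hF : MeasurableSet {ω : ℕ → S | ω (n + 1) = j} := by measurability
  have hfiber (x : Fin (n + 1) → S) : P ⁻¹' {x} = {ω | ∀ t ≤ n, ω t = x (Fin.clamp t n)} := by
    ext ω
    simp only [Set.mem_preimage, Set.mem_singleton_iff, funext_iff, Fin.forall_iff,
      Nat.lt_succ_iff, Set.mem_ofPred_eq]
    exact forall₂_congr fun t ht => by simp [P, Fin.clamp, Nat.min_eq_left ht]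
  have hfib_meas : ∀ x ∈ D, MeasurableSet (P ⁻¹' {x}) := fun x _ => hP (measurableSet_singleton x)
  rw [← Measure.restrict_apply' hF, ← tsum_measure_preimage_singleton D.to_countable hfib_meas,
    ← tsum_measure_preimage_singleton D.to_countable hfib_meas, ← ENNReal.tsum_mul_right]
  refine tsum_congr fun x => ?_
  rw [Measure.restrict_apply' hF, hfiber, h.measure_cylinder_inter_succ, ← hD x x.2]
  simp [Fin.clamp, Fin.last]

lemma IsMarkovChain.measure_avoid_inter_succ [Countable S] [MeasurableSingletonClass S]
    (h : IsMarkovChain p s μ) (z : S) (n : ℕ) (i j : S) :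
    μ ({ω | (∀ t ≤ n, ω t ≠ z) ∧ ω n = i} ∩ {ω | ω (n + 1) = j}) =
      μ {ω | (∀ t ≤ n, ω t ≠ z) ∧ ω n = i} * p i j := by
  have hprefix : {ω : ℕ → S | (∀ t ≤ n, ω t ≠ z) ∧ ω n = i} =
      (fun ω (t : Fin (n + 1)) => ω t) ⁻¹' {x | (∀ t, x t ≠ z) ∧ x (Fin.last n) = i} := by
    ext ω
    simp [Fin.forall_iff]
  rw [hprefix]
  exact h.measure_prefix_inter_succ (fun x hx => hx.2) j

lemma IsMarkovChain.measure_avoid_eq_tabooLaw [Countable S] [MeasurableSingletonClass S]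
    (h : IsMarkovChain p s μ) {z : S} (hs : s ≠ z) (n : ℕ) (j : S) :
    μ {ω | (∀ t ≤ n, ω t ≠ z) ∧ ω n = j} = tabooLaw p z s n j := by
  have htaboo (n : ℕ) : μ {ω | (∀ t ≤ n, ω t ≠ z) ∧ ω n = z} = tabooLaw p z s n z := by
    have hempty : {ω : ℕ → S | (∀ t ≤ n, ω t ≠ z) ∧ ω n = z} = ∅ :=
      Set.eq_empty_of_forall_notMem fun ω hω => hω.1 n le_rfl hω.2
    rw [tabooLaw_taboo hs, hempty, measure_empty]
  induction n generalizing j with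
  | zero =>
    rcases eq_or_ne j z with rfl | hj
    · exact htaboo 0
    have hcyl : {ω : ℕ → S | (∀ t ≤ 0, ω t ≠ z) ∧ ω 0 = j} = {ω | ∀ t ≤ 0, ω t = j} := by
      ext ω
      simp only [nonpos_iff_eq_zero, forall_eq, Set.mem_ofPred_eq]
      exact ⟨And.right, fun h0 => ⟨h0 ▸ hj, h0⟩⟩
    rw [hcyl, h.2 0 fun _ => j]
    simp [tabooLaw]
  | succ n ih =>
    rcases eq_or_ne j z with rfl | hj
    · exact htaboo (n + 1)
    have hunion : {ω : ℕ → S | (∀ t ≤ n + 1, ω t ≠ z) ∧ ω (n + 1) = j} =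
        ⋃ i, {ω | (∀ t ≤ n, ω t ≠ z) ∧ ω n = i} ∩ {ω | ω (n + 1) = j} := by
      ext ω
      simp only [Set.mem_iUnion, Set.mem_inter_iff, Set.mem_ofPred_eq]
      constructor
      · rintro ⟨hz, hj'⟩
        exact ⟨ω n, ⟨fun t ht => hz t (by omega), rfl⟩, hj'⟩
      · rintro ⟨i, ⟨hz, -⟩, hj'⟩
        refine ⟨fun t ht => ?_, hj'⟩
        rcases Nat.le_succ_iff.1 ht with ht | rfl
        exacts [hz t ht, hj' ▸ hj]
    rw [hunion, measure_iUnion]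
    · simp only [tabooLaw, if_neg hj]
      exact tsum_congr fun i => by rw [h.measure_avoid_inter_succ, ih]
    · refine fun a b hab => Set.disjoint_left.2 ?_
      rintro ω ⟨⟨-, ha⟩, -⟩ ⟨⟨-, hb⟩, -⟩
      exact hab (ha.symm.trans hb)
    · intro i
      measurability

lemma IsMarkovChain.tsum_tabooLaw_mul_le_one [Countable S] [MeasurableSingletonClass S]
    (h : IsMarkovChain p s μ) {z : S} (hs : s ≠ z) (i : S) :
    ∑' n, tabooLaw p z s n i * p i z ≤ 1 := by
  have := h.1
  calc ∑' n, tabooLaw p z s n i * p i z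
      = μ (⋃ n, {ω | (∀ t ≤ n, ω t ≠ z) ∧ ω n = i} ∩ {ω | ω (n + 1) = z}) := by
        rw [measure_iUnion]
        · exact tsum_congr fun n => by
            rw [h.measure_avoid_inter_succ, h.measure_avoid_eq_tabooLaw hs]
        · refine (pairwise_disjoint_on _).2 fun m n hmn => Set.disjoint_left.2 fun ω hm hn => ?_
          exact hn.1.1 (m + 1) hmn hm.2
        · intro n
          measurability
    _ ≤ 1 := prob_le_one

lemma IsMarkovChain.lintegral_hitTimeFrom0_eq_tsum_tabooLaw [Countable S]
    [MeasurableSingletonClass S] (h : IsMarkovChain p s μ) {z : S} (hs : s ≠ z) :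
    ∫⁻ ω, hitTimeFrom0 z ω ∂μ = ∑' n, ∑' j, tabooLaw p z s n j := by
  have hmeas (n : ℕ) : MeasurableSet {ω : ℕ → S | ∀ t ≤ n, ω t ≠ z} := by measurability
  simp_rw [hitTimeFrom0_eq_tsum_indicator]
  rw [lintegral_tsum fun n => (measurable_one.indicator (hmeas n)).aemeasurable]
  refine tsum_congr fun n => ?_
  have hunion : {ω : ℕ → S | ∀ t ≤ n, ω t ≠ z} = ⋃ j, {ω | (∀ t ≤ n, ω t ≠ z) ∧ ω n = j} := by
    ext ω
    simp
  rw [lintegral_indicator_one (hmeas n), hunion, measure_iUnion]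
  · exact tsum_congr (h.measure_avoid_eq_tabooLaw hs n)
  · exact fun i j hij => Set.disjoint_left.2 fun ω hi hj => hij (hi.2.symm.trans hj.2)
  · intro j
    measurability

end MarkovChain

section RandomCompass

variable {k : ℕ}

lemma rcTrans_of_lt {i j : ℕ} (hj : j ≠ 0) (hjk : j < k) :
    rcTrans k i j = if i = j + 1 then 2⁻¹ else 0 := by
  unfold rcTrans
  split_ifs <;> first | omega | simp

lemma rcTrans_top {i : ℕ} (hi : i ≠ 0) (hik : i ≤ k) : rcTrans k i k = 2⁻¹ := by
  unfold rcTrans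
  split_ifs <;> first | omega | simp

lemma rcTrans_of_gt {i j : ℕ} (hkj : k < j) : rcTrans k i j = 0 := by
  unfold rcTrans
  split_ifs <;> first | omega | simp

lemma rcTrans_one_zero (hk : k ≠ 0) : rcTrans k 1 0 = 2⁻¹ := by
  simp [rcTrans, Nat.one_le_iff_ne_zero.2 hk, hk.symm]

lemma tabooLaw_rcTrans_eq_zero (hk : k ≠ 0) (n : ℕ) {j : ℕ} (hj : j = 0 ∨ k < j) :
    tabooLaw (rcTrans k) 0 k n j = 0 := by
  rcases hj with rfl | hkj
  · exact tabooLaw_taboo hk n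
  cases n <;> simp [tabooLaw, rcTrans_of_gt hkj, hkj.ne', show j ≠ 0 by omega]

lemma tabooLaw_rcTrans_succ_of_lt (n : ℕ) {j : ℕ} (hj : j ≠ 0) (hjk : j < k) :
    tabooLaw (rcTrans k) 0 k (n + 1) j = 2⁻¹ * tabooLaw (rcTrans k) 0 k n (j + 1) := by
  simp only [tabooLaw, if_neg hj, rcTrans_of_lt hj hjk, mul_ite, mul_zero]
  rw [tsum_ite_eq, mul_comm]

lemma tabooLaw_rcTrans_succ_top (hk : k ≠ 0) (n : ℕ) :
    tabooLaw (rcTrans k) 0 k (n + 1) k = 2⁻¹ * ∑' i, tabooLaw (rcTrans k) 0 k n i := by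
  simp only [tabooLaw, if_neg hk, ← ENNReal.tsum_mul_left]
  refine tsum_congr fun i => ?_
  by_cases hi : i = 0 ∨ k < i
  · simp [tabooLaw_rcTrans_eq_zero hk n hi]
  · rw [rcTrans_top (by omega) (by omega), mul_comm]

lemma green_rcTrans_eq_zero (hk : k ≠ 0) {j : ℕ} (hj : j = 0 ∨ k < j) :
    green (rcTrans k) 0 k j = 0 := by
  simp [green, tabooLaw_rcTrans_eq_zero hk _ hj]

lemma green_rcTrans_of_lt {j : ℕ} (hj : j ≠ 0) (hjk : j < k) :
    green (rcTrans k) 0 k j = 2⁻¹ * green (rcTrans k) 0 k (j + 1) := by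
  rw [green, tsum_eq_zero_add' ENNReal.summable]
  simp only [tabooLaw_rcTrans_succ_of_lt _ hj hjk, ENNReal.tsum_mul_left]
  simp [tabooLaw, hjk.ne, green]

lemma green_rcTrans_top (hk : k ≠ 0) :
    green (rcTrans k) 0 k k = 1 + 2⁻¹ * ∑' n, ∑' j, tabooLaw (rcTrans k) 0 k n j := by
  rw [green, tsum_eq_zero_add' ENNReal.summable]
  simp only [tabooLaw_rcTrans_succ_top hk, ENNReal.tsum_mul_left]
  simp [tabooLaw]

lemma green_rcTrans_succ_eq_pow {j : ℕ} (hjk : j < k) :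
    green (rcTrans k) 0 k (j + 1) = 2 ^ j * green (rcTrans k) 0 k 1 := by
  induction j with
  | zero => simp
  | succ j ih =>
    rw [pow_succ', mul_assoc, ← ih (by omega), green_rcTrans_of_lt (j := j + 1) (by omega) hjk,
      ENNReal.mul_inv_cancel_left two_ne_zero ofNat_ne_top]

lemma tsum_tsum_tabooLaw_rcTrans_eq (hk : k ≠ 0) :
    ∑' n, ∑' j, tabooLaw (rcTrans k) 0 k n j =
      (∑ j ∈ range k, (2 : ℝ≥0∞) ^ j) * green (rcTrans k) 0 k 1 := by
  rw [ENNReal.tsum_comm]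
  change ∑' j, green (rcTrans k) 0 k j = _
  rw [tsum_eq_sum (s := range (k + 1)) fun j hj =>
      green_rcTrans_eq_zero hk (by simp at hj; omega),
    sum_range_succ', green_rcTrans_eq_zero hk (Or.inl rfl), add_zero, sum_mul]
  exact sum_congr rfl fun j hj => green_rcTrans_succ_eq_pow (mem_range.1 hj)

lemma tsum_tsum_tabooLaw_rcTrans (hk : k ≠ 0) (hfin : green (rcTrans k) 0 k 1 ≠ ⊤) :
    ∑' n, ∑' j, tabooLaw (rcTrans k) 0 k n j = 2 ^ (k + 1) - 2 := by
  obtain ⟨m, rfl⟩ : ∃ m, k = m + 1 := Nat.exists_eq_succ_of_ne_zero hk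
  set E := ∑' n, ∑' j, tabooLaw (rcTrans (m + 1)) 0 (m + 1) n j
  set x := green (rcTrans (m + 1)) 0 (m + 1) 1
  set g := ∑ j ∈ range (m + 1), (2 : ℝ≥0∞) ^ j
  have hE : E = g * x := tsum_tsum_tabooLaw_rcTrans_eq hk
  have hg : g + 1 = 2 ^ (m + 1) := by
    simpa [one_add_one_eq_two] using geom_sum_mul_add (1 : ℝ≥0∞) (m + 1)
  have hgx : g * x ≠ ⊤ := mul_ne_top (sum_ne_top.2 fun _ _ => pow_ne_top ofNat_ne_top) hfin
  have hx : x = 2 := by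
    refine (ENNReal.add_right_inj hgx).1 ?_
    calc g * x + x = 2 * (2 ^ m * x) := by rw [← mul_assoc, ← pow_succ', ← hg, add_mul, one_mul]
    _ = 2 * green (rcTrans (m + 1)) 0 (m + 1) (m + 1) := by
      rw [green_rcTrans_succ_eq_pow (lt_add_one m)]
    _ = 2 + E := by
      rw [green_rcTrans_top hk, mul_add, mul_one,
        ENNReal.mul_inv_cancel_left two_ne_zero ofNat_ne_top]
    _ = g * x + 2 := by rw [hE, add_comm]
  rw [hE, hx]
  refine ENNReal.eq_sub_of_add_eq ofNat_ne_top ?_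
  rw [pow_succ, ← hg]
  ring

end RandomCompass

theorem statement11 (k : ℕ) (hk : 1 ≤ k)
    (μ : MeasureTheory.Measure (ℕ → ℕ))
    (h : IsMarkovChain (rcTrans k) k μ) :
    (∫⁻ ω, hitTimeFrom0 0 ω ∂μ) = 2 ^ (k + 1) - 2 := by
  have hk0 : k ≠ 0 := Nat.one_le_iff_ne_zero.1 hk
  have hfin : green (rcTrans k) 0 k 1 ≠ ⊤ := by
    have hexit : green (rcTrans k) 0 k 1 * 2⁻¹ ≤ 1 := by
      simpa only [rcTrans_one_zero hk0, ENNReal.tsum_mul_right, green] using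
        h.tsum_tabooLaw_mul_le_one hk0 1
    exact fun htop => by simp [htop] at hexit
  rw [h.lintegral_hitTimeFrom0_eq_tsum_tabooLaw hk0]
  exact tsum_tsum_tabooLaw_rcTrans hk0 hfin
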